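/- The braid b⁹ = σ_3^{−3} σ_1^{−3} σ_2^{−1} σ_3 σ_2^{−2} σ_1^{−2} σ_2^{−1} σ_3^{−1} σ_2 σ_1^{−2} σ_2^{−1} σ_3^{2} σ_2 σ_1 Δ_4^2 in the braid group B_4 is not quasipositive. -/

import Mathlib

/-!
A product of `k` conjugates of `σ₁` has exponent sum `k`, so a quasipositive braid `b` is a
product of `e(b)` conjugates of `σ₁`. In a linear representation `ρ` where `ρ σ₁ - 1` has
rank one, each conjugate of `σ₁` is a rank-one perturbation of the identity, and
`AB - 1 = A (B - 1) + (A - 1)` makes `rank (g - 1)` subadditive; hence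
`rank (ρ b - 1) ≤ e(b)`. For `b⁹` we have `e = 2`, while in the reduced Burau representation
of `B₄` at `t = 2` one computes `det (ρ b⁹ - 1) = 45/8`, so `rank (ρ b⁹ - 1) = 3`.
-/

open FreeGroup in
/-- The braid relations on `n` generators. -/
def braidRels (n : ℕ) : Set (FreeGroup (Fin n)) :=
  {r | (∃ i j : Fin n, (i : ℕ) + 1 = (j : ℕ) ∧
          r = of i * of j * of i * (of j * of i * of j)⁻¹) ∨
       (∃ i j : Fin n, (i : ℕ) + 2 ≤ (j : ℕ) ∧
          r = of i * of j * (of j * of i)⁻¹)}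

/-- The braid group `B_{n+1}`, presented with `n` generators `σ_1, …, σ_n`
(so `Braid (m - 1)` is the braid group on `m` strands). -/
def Braid (n : ℕ) : Type := PresentedGroup (braidRels n)

instance (n : ℕ) : Group (Braid n) :=
  inferInstanceAs (Group (PresentedGroup (braidRels n)))

/-- The Artin generator `σ_{i+1}` of the braid group (indices start at `0`,
so `σ 0` is the generator usually written `σ_1`). -/
def σ {n : ℕ} (i : Fin n) : Braid n := PresentedGroup.of i

/-- A braid is quasipositive if it can be written as a (possibly empty) product
of conjugates `w σ_1 w⁻¹` of the first Artin generator. -/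
def Quasipositive {n : ℕ} [NeZero n] (b : Braid n) : Prop :=
  ∃ l : List (Braid n), b = (l.map fun w => w * σ 0 * w⁻¹).prod


/-- `σ_1` in the braid group `B_4`. -/
def σ₁ : Braid 3 := σ 0
/-- `σ_2` in the braid group `B_4`. -/
def σ₂ : Braid 3 := σ 1
/-- `σ_3` in the braid group `B_4`. -/
def σ₃ : Braid 3 := σ 2
/-- The Garside element `Δ_4 = σ_1 σ_2 σ_3 σ_1 σ_2 σ_1` of `B_4`. -/
def Δ₄ : Braid 3 := σ₁ * σ₂ * σ₃ * σ₁ * σ₂ * σ₁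

open Matrix

namespace Braid

variable {n : ℕ} {G : Type*} [Group G]

def lift (f : Fin n → G)
    (h_adj : ∀ i j : Fin n, (i : ℕ) + 1 = j → f i * f j * f i = f j * f i * f j)
    (h_far : ∀ i j : Fin n, (i : ℕ) + 2 ≤ j → f i * f j = f j * f i) : Braid n →* G :=
  PresentedGroup.toGroup (rels := braidRels n) (f := f) <| by
    rintro r (⟨i, j, hij, rfl⟩ | ⟨i, j, hij, rfl⟩)
    · simp [h_adj i j hij]
    · simp [h_far i j hij]

@[simp]
lemma lift_σ (f : Fin n → G) h_adj h_far (i : Fin n) : lift f h_adj h_far (σ i) = f i :=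
  PresentedGroup.toGroup.of _

def exponentSum : Braid n →* Multiplicative ℤ :=
  lift (fun _ => .ofAdd 1) (fun _ _ _ => rfl) (fun _ _ _ => rfl)

@[simp]
lemma exponentSum_σ (i : Fin n) : exponentSum (σ i) = .ofAdd 1 := lift_σ ..

lemma exponentSum_prod_conj [NeZero n] (l : List (Braid n)) :
    exponentSum (l.map fun w => w * σ 0 * w⁻¹).prod = .ofAdd (l.length : ℤ) := by
  induction l with
  | nil => rfl
  | cons w l ih =>
    simp only [List.map_cons, List.prod_cons, map_mul, map_inv, ih, exponentSum_σ,
      mul_inv_cancel_right, List.length_cons, Nat.cast_succ, ofAdd_add, mul_comm]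

end Braid

namespace Matrix

section Field

variable {m n K : Type*} [Fintype n] [Field K]

lemma rank_add_le (A B : Matrix m n K) : (A + B).rank ≤ A.rank + B.rank := by
  unfold rank
  rw [mulVecLin_add]
  exact (Submodule.finrank_mono (LinearMap.range_add_le _ _)).trans
    (Submodule.finrank_add_le_finrank_add_finrank _ _)

variable [DecidableEq n]

lemma rank_mul_sub_one_le (A B : Matrix n n K) :
    (A * B - 1).rank ≤ (A - 1).rank + (B - 1).rank := by
  calc (A * B - 1).rank = (A * (B - 1) + (A - 1)).rank := by
        rw [Matrix.mul_sub, Matrix.mul_one, sub_add_sub_cancel]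
    _ ≤ (A * (B - 1)).rank + (A - 1).rank := rank_add_le _ _
    _ ≤ (B - 1).rank + (A - 1).rank := by gcongr; exact rank_mul_le_right _ _
    _ = (A - 1).rank + (B - 1).rank := add_comm _ _

end Field

lemma rank_conj_sub_one {n R : Type*} [Fintype n] [DecidableEq n] [CommRing R]
    (g : GL n R) (A : Matrix n n R) :
    ((g : Matrix n n R) * A * (g⁻¹ : GL n R) - 1).rank = (A - 1).rank := by
  have : (g : Matrix n n R) * A * (g⁻¹ : GL n R) - 1 = g * ((A - 1) * (g⁻¹ : GL n R)) := by
    simp [Matrix.mul_sub, Matrix.sub_mul, Matrix.mul_assoc]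
  rw [this, rank_mul_eq_right_of_isUnit_det _ _ (isUnits_det_units g),
    rank_mul_eq_left_of_isUnit_det _ _ (isUnits_det_units g⁻¹)]

end Matrix

section RankBound

variable {n : ℕ} [NeZero n] {m K : Type*} [Fintype m] [DecidableEq m] [Field K]
  (ρ : Braid n →* GL m K)

lemma Braid.rank_prod_conj_sub_one_le (hρ : ((ρ (σ 0) : Matrix m m K) - 1).rank ≤ 1)
    (l : List (Braid n)) :
    ((ρ (l.map fun w => w * σ 0 * w⁻¹).prod : Matrix m m K) - 1).rank ≤ l.length := by
  induction l with
  | nil => simp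
  | cons w l ih =>
    simp only [List.map_cons, List.prod_cons, map_mul, map_inv, Units.val_mul, List.length_cons]
    calc _ ≤ ((ρ w : Matrix m m K) * ρ (σ 0) * (ρ w)⁻¹ - 1).rank + l.length :=
          (Matrix.rank_mul_sub_one_le _ _).trans (by gcongr)
      _ ≤ 1 + l.length := by rw [Matrix.rank_conj_sub_one]; gcongr
      _ = l.length + 1 := add_comm _ _

theorem Quasipositive.rank_sub_one_le (hρ : ((ρ (σ 0) : Matrix m m K) - 1).rank ≤ 1)
    {b : Braid n} (hb : Quasipositive b) :
    (((ρ b : Matrix m m K) - 1).rank : ℤ) ≤ (Braid.exponentSum b).toAdd := by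
  obtain ⟨l, rfl⟩ := hb
  rw [Braid.exponentSum_prod_conj, toAdd_ofAdd, Nat.cast_le]
  exact Braid.rank_prod_conj_sub_one_le ρ hρ l

end RankBound

section ReducedBurau

variable {R : Type*} [CommRing R]

def reducedBurauGen (t : Rˣ) : Fin 3 → GL (Fin 3) R :=
  ![⟨!![-t, 1, 0; 0, 1, 0; 0, 0, 1], !![-↑t⁻¹, ↑t⁻¹, 0; 0, 1, 0; 0, 0, 1],
      by simp [one_fin_three], by simp [one_fin_three]⟩,
    ⟨!![1, 0, 0; t, -t, 1; 0, 0, 1], !![1, 0, 0; 1, -↑t⁻¹, ↑t⁻¹; 0, 0, 1],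
      by simp [one_fin_three], by simp [one_fin_three]⟩,
    ⟨!![1, 0, 0; 0, 1, 0; 0, t, -t], !![1, 0, 0; 0, 1, 0; 0, 1, -↑t⁻¹],
      by simp [one_fin_three], by simp [one_fin_three]⟩]

lemma reducedBurauGen_braid_adj (t : Rˣ) (i j : Fin 3) (h : (i : ℕ) + 1 = j) :
    reducedBurauGen t i * reducedBurauGen t j * reducedBurauGen t i =
      reducedBurauGen t j * reducedBurauGen t i * reducedBurauGen t j := by
  fin_cases i <;> fin_cases j <;> simp_all [Units.ext_iff, reducedBurauGen]

lemma reducedBurauGen_braid_far (t : Rˣ) (i j : Fin 3) (h : (i : ℕ) + 2 ≤ j) :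
    reducedBurauGen t i * reducedBurauGen t j = reducedBurauGen t j * reducedBurauGen t i := by
  fin_cases i <;> fin_cases j <;> simp_all [Units.ext_iff, reducedBurauGen]

def reducedBurau (t : Rˣ) : Braid 3 →* GL (Fin 3) R :=
  Braid.lift (reducedBurauGen t) (reducedBurauGen_braid_adj t) (reducedBurauGen_braid_far t)

@[simp]
lemma reducedBurau_σ (t : Rˣ) (i : Fin 3) : reducedBurau t (σ i) = reducedBurauGen t i :=
  Braid.lift_σ ..

lemma rank_reducedBurau_σ_zero_sub_one_le [StrongRankCondition R] (t : Rˣ) :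
    ((reducedBurau t (σ 0) : Matrix (Fin 3) (Fin 3) R) - 1).rank ≤ 1 := by
  have : (reducedBurau t (σ 0) : Matrix (Fin 3) (Fin 3) R) - 1 =
      vecMulVec ![1, 0, 0] ![-(t : R) - 1, 1, 0] := by
    ext i j
    fin_cases i <;> fin_cases j <;> simp [reducedBurauGen, vecMulVec]
  rw [this]
  exact rank_vecMulVec_le _ _

end ReducedBurau

theorem b9_not_quasipositive :
    ¬ Quasipositive
      ((σ₃ ^ 3)⁻¹ * (σ₁ ^ 3)⁻¹ * σ₂⁻¹ * σ₃ * (σ₂ ^ 2)⁻¹ * (σ₁ ^ 2)⁻¹ * σ₂⁻¹ * σ₃⁻¹ *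
        σ₂ * (σ₁ ^ 2)⁻¹ * σ₂⁻¹ * σ₃ ^ 2 * σ₂ * σ₁ * Δ₄ ^ 2) := by
  intro hb
  have hrank := hb.rank_sub_one_le (reducedBurau (.mk0 (2 : ℚ) two_ne_zero))
    (rank_reducedBurau_σ_zero_sub_one_le _)
  rw [Matrix.rank_of_det_ne_zero] at hrank
  · simp [σ₁, σ₂, σ₃, Δ₄] at hrank
  · simp [σ₁, σ₂, σ₃, Δ₄, reducedBurauGen, pow_succ, det_fin_three, one_fin_three]
    norm_num
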